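/- arXiv:2104.14436 — 3 statements merged into one kernel-verified Lean document; each statement's English description precedes it below -/
import Mathlib

section
/- For every finite abelian group G of order n ≥ 1, there exist subsets S₁, S₂ of G with |S₁| ≤ 2√n and |S₂| ≤ 2√n such that S₁ + S₂ = G. -/
/-!
Take a subgroup `H` with `|H|² ≤ n` of maximal order. Adjoining a suitable element `x` gives
`K = H + ⟨x⟩` with `|K|² ≥ n`, and `K / H` is cyclic of order `m = [K : H]`, generated by `x`.
With `k = ⌊√n / |H|⌋ + 1`, baby steps and giant steps
`S₁ = H + {0, x, …, (k - 1) x}` and `S₂ = {0, k x, …, ⌊m / k⌋ k x} + T`, for a transversal `T`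
of `K`, cover `G`. Now `|S₁| ≤ |H| k ≤ 2√n`, and `|S₂| ≤ (m / k + 1) [G : K] ≤ n / (|H| k) + [G : K]`,
where both terms are at most `√n` because `|H| k > √n` and `|K| ≥ √n`.
-/

open Pointwise

lemma mul_floor_div_add_one_le_two_mul {r d : ℝ} (hd : 0 < d) (hdr : d ≤ r) :
    d * (⌊r / d⌋₊ + 1) ≤ 2 * r := by
  have := (le_div_iff₀' hd).mp (Nat.floor_le (div_nonneg (hd.le.trans hdr) hd.le))
  linarith

lemma lt_mul_floor_div_add_one {r d : ℝ} (hd : 0 < d) : r < d * (⌊r / d⌋₊ + 1) :=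
  (div_lt_iff₀' hd).mp (Nat.lt_floor_add_one _)

lemma cast_div_add_one_mul_le_two_mul {d m q k : ℕ} {r : ℝ} (hr : 0 < r)
    (hdmq : (d * m * q : ℝ) = r ^ 2) (hdk : r < d * k) (hdm : r ≤ d * m) :
    ((m / k + 1 : ℕ) * q : ℝ) ≤ 2 * r := by
  have hq : (q : ℝ) ≤ r := by
    refine le_of_mul_le_mul_right ?_ hr
    calc (q : ℝ) * r ≤ q * (d * m) := by gcongr
      _ = r * r := by rw [← sq, ← hdmq]; ring
  have hmkq : ((m / k : ℕ) : ℝ) * q ≤ r := by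
    refine le_of_mul_le_mul_right ?_ (hr.trans hdk)
    have hmk : ((m / k : ℕ) : ℝ) * k ≤ m := by exact_mod_cast Nat.div_mul_le_self m k
    calc ((m / k : ℕ) : ℝ) * q * (d * k) = ((m / k : ℕ) * k) * (d * q) := by ring
      _ ≤ m * (d * q) := by gcongr
      _ = r * r := by rw [← sq, ← hdmq]; ring
      _ ≤ r * (d * k) := by gcongr
  push_cast
  linarith

lemma Set.ncard_add_le {M : Type*} [Add M] [IsCancelAdd M] (s t : Set M) :
    (s + t).ncard ≤ s.ncard * t.ncard := by
  simpa only [Nat.card_coe_set_eq] using Set.natCard_add_le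

namespace AddSubgroup

variable {G : Type*}

lemma exists_sq_card_le_le_sq_card_sup_zmultiples [AddGroup G] [Finite G] :
    ∃ H : AddSubgroup G, Nat.card H ^ 2 ≤ Nat.card G ∧
      ∃ x : G, Nat.card G ≤ Nat.card ↥(H ⊔ zmultiples x) ^ 2 := by
  obtain ⟨H, hH, hmax⟩ := Set.exists_max_image {H : AddSubgroup G | Nat.card H ^ 2 ≤ Nat.card G}
    (fun H ↦ Nat.card H) (Set.toFinite _)
    ⟨⊥, by rw [Set.mem_ofPred_eq, card_bot, one_pow]; exact Nat.card_pos⟩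
  refine ⟨H, hH, ?_⟩
  by_contra! hlt
  have htop : H = ⊤ := eq_top_iff' H |>.mpr fun x ↦
    (eq_of_le_of_card_ge le_sup_left (hmax _ (hlt x).le)).symm ▸ mem_sup_right (mem_zmultiples x)
  have h0 := hlt 0
  rw [htop, top_sup_eq, card_top] at h0
  exact h0.not_ge (Nat.le_self_pow two_ne_zero _)

variable [AddCommGroup G] [Finite G]

lemma exists_add_nsmul_eq_of_mem_sup_zmultiples {H : AddSubgroup G} {x y : G}
    (hy : y ∈ H ⊔ zmultiples x) : ∃ h ∈ H, ∃ a < H.relIndex (H ⊔ zmultiples x), h + a • x = y := by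
  obtain ⟨h, hh, _, ⟨z, rfl⟩, rfl⟩ := mem_sup.mp hy
  set m := H.relIndex (H ⊔ zmultiples x)
  have hm : (0 : ℤ) < m := by
    exact_mod_cast Nat.pos_of_ne_zero (index_ne_zero_of_finite (H := H.addSubgroupOf _))
  have hmx : m • x ∈ H := nsmul_relIndex_mem H (mem_sup_right (mem_zmultiples x))
  refine ⟨h + (z / m) • m • x, add_mem hh (zsmul_mem hmx _), (z % m).toNat,
    by have := Int.emod_lt_of_pos z hm; omega, ?_⟩
  have hz : ((z % m).toNat : ℤ) = z % m := Int.toNat_of_nonneg (Int.emod_nonneg z hm.ne')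
  show _ = h + z • x
  rw [← natCast_zsmul _ (z % m).toNat, hz, ← natCast_zsmul _ m, smul_smul, add_assoc, ← add_zsmul,
    Int.ediv_mul_add_emod]

lemma exists_add_eq_univ_ncard_le (H : AddSubgroup G) (x : G) {k : ℕ} (hk : 0 < k) :
    ∃ S₁ S₂ : Set G, S₁.ncard ≤ Nat.card H * k ∧
      S₂.ncard ≤ (H.relIndex (H ⊔ zmultiples x) / k + 1) * (H ⊔ zmultiples x).index ∧
      S₁ + S₂ = Set.univ := by
  classical
  set K := H ⊔ zmultiples x
  set c := H.relIndex K / k + 1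
  obtain ⟨T, hT, -⟩ := K.exists_isComplement_left 0
  have ncard_image_range (f : ℕ → G) (l : ℕ) :
      (((Finset.range l).image f : Finset G) : Set G).ncard ≤ l := by
    rw [Set.ncard_coe_finset]; exact Finset.card_image_le.trans (Finset.card_range l).le
  refine ⟨H + ((Finset.range k).image (· • x) : Finset G),
    ((Finset.range c).image (fun j ↦ (k * j) • x) : Finset G) + T, ?_, ?_, ?_⟩
  · refine (Set.ncard_add_le _ _).trans (Nat.mul_le_mul ?_ (ncard_image_range _ _))
    rw [← Nat.card_coe_set_eq, SetLike.coe_sort_coe]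
  · rw [← hT.ncard_left]
    exact (Set.ncard_add_le _ _).trans (Nat.mul_le_mul_right _ (ncard_image_range _ _))
  · refine Set.eq_univ_of_forall fun g ↦ ?_
    obtain ⟨t, ht, y, hy, rfl⟩ := Set.mem_add.mp (hT.add_eq ▸ Set.mem_univ g)
    obtain ⟨h, hh, a, ha, rfl⟩ := exists_add_nsmul_eq_of_mem_sup_zmultiples hy
    have hdecomp : t + (h + a • x) = (h + (a % k) • x) + ((k * (a / k)) • x + t) := by
      nth_rw 1 [← Nat.mod_add_div a k]; rw [add_nsmul]; abel
    rw [hdecomp]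
    refine Set.add_mem_add (Set.add_mem_add hh ?_) (Set.add_mem_add ?_ ht) <;>
      simp only [Finset.coe_image, Finset.coe_range, Set.mem_image, Set.mem_Iio]
    · exact ⟨a % k, Nat.mod_lt a hk, rfl⟩
    · exact ⟨a / k, Nat.lt_succ_of_le (Nat.div_le_div_right ha.le), rfl⟩

end AddSubgroup

theorem stmt_4_general {G : Type*} [AddCommGroup G] [Finite G] (n : ℕ)
    (hn : Nat.card G = n) :
    ∃ S₁ S₂ : Set G,
      (S₁.ncard : ℝ) ≤ 2 * Real.sqrt n ∧
      (S₂.ncard : ℝ) ≤ 2 * Real.sqrt n ∧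
      S₁ + S₂ = Set.univ := by
  obtain ⟨H, hH, x, hK⟩ := AddSubgroup.exists_sq_card_le_le_sq_card_sup_zmultiples (G := G)
  set K := H ⊔ AddSubgroup.zmultiples x
  have hcardK : Nat.card H * H.relIndex K = Nat.card K := by
    rw [← AddSubgroup.relIndex_bot_left, ← AddSubgroup.relIndex_bot_left,
      AddSubgroup.relIndex_mul_relIndex _ _ _ bot_le le_sup_left]
  set d := Nat.card H
  set m := H.relIndex K
  have hdmq : (d * m * K.index : ℝ) = √n ^ 2 := by
    rw [Real.sq_sqrt n.cast_nonneg, ← hn]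
    exact_mod_cast hcardK ▸ K.card_mul_index
  have hd : (0 : ℝ) < d := by exact_mod_cast Nat.card_pos
  have hr : 0 < √n := Real.sqrt_pos.mpr (by exact_mod_cast hn ▸ Nat.card_pos)
  have hdr : (d : ℝ) ≤ √n := Real.le_sqrt_of_sq_le (by exact_mod_cast hn ▸ hH)
  have hdm : √n ≤ d * m :=
    (Real.sqrt_le_left (by positivity)).mpr (by exact_mod_cast hn ▸ hcardK ▸ hK)
  obtain ⟨S₁, S₂, h₁, h₂, hS⟩ := H.exists_add_eq_univ_ncard_le x (Nat.succ_pos ⌊√n / d⌋₊)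
  refine ⟨S₁, S₂, ?_, ?_, hS⟩
  · calc (S₁.ncard : ℝ) ≤ d * (⌊√n / d⌋₊ + 1 : ℕ) := by exact_mod_cast h₁
      _ ≤ 2 * √n := by push_cast; exact mul_floor_div_add_one_le_two_mul hd hdr
  · calc (S₂.ncard : ℝ) ≤ ((m / (⌊√n / d⌋₊ + 1) + 1 : ℕ) : ℝ) * K.index := by exact_mod_cast h₂
      _ ≤ 2 * √n := cast_div_add_one_mul_le_two_mul hr hdmq
          (by push_cast; exact lt_mul_floor_div_add_one hd) hdm

theorem stmt_4 {G : Type*} [AddCommGroup G] [Finite G] (n : ℕ)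
    (hn : Nat.card G = n) (hn1 : 1 ≤ n) :
    ∃ S₁ S₂ : Set G,
      (S₁.ncard : ℝ) ≤ 2 * Real.sqrt n ∧
      (S₂.ncard : ℝ) ≤ 2 * Real.sqrt n ∧
      S₁ + S₂ = Set.univ :=
  stmt_4_general n hn
end

section
/- For every finite group G of order n > 1, there exist subsets S₁, S₂ of G with |S₁| ≤ ⌈√(n ln n)⌉ and |S₂| ≤ ⌈√(n ln n)⌉ such that S₁S₂ = G. -/
open Pointwise

theorem stmt_5 {G : Type*} [Group G] [Finite G] (n : ℕ)
    (hn : Nat.card G = n) (hn1 : 1 < n) :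
    ∃ S₁ S₂ : Set G,
      S₁.ncard ≤ ⌈Real.sqrt (n * Real.log n)⌉₊ ∧
      S₂.ncard ≤ ⌈Real.sqrt (n * Real.log n)⌉₊ ∧
      S₁ * S₂ = Set.univ := by
  classical
  cases nonempty_fintype G
  have hN : Fintype.card G = n := by rw [← Nat.card_eq_fintype_card, hn]
  set k : ℕ := ⌈Real.sqrt (n * Real.log n)⌉₊ with hk
  have hn0 : (0:ℝ) < n := by positivity
  have hlog : (0:ℝ) < Real.log n := Real.log_pos (by exact_mod_cast hn1)
  have hx0 : (0:ℝ) ≤ (n:ℝ) * Real.log n := by positivity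
  have hk1 : 1 ≤ k := by
    rw [hk, Nat.one_le_ceil_iff]
    positivity
  have hkn : k ≤ n := by
    rw [hk, Nat.ceil_le]
    calc Real.sqrt ((n:ℝ) * Real.log n) ≤ Real.sqrt ((n:ℝ) * n) := by
          apply Real.sqrt_le_sqrt
          have : Real.log n ≤ (n:ℝ) := by
            have := Real.log_le_sub_one_of_pos hn0
            linarith
          nlinarith
      _ = (n:ℝ) := by rw [Real.sqrt_mul_self hn0.le]
  have hkR : (0:ℝ) < k := by exact_mod_cast hk1
  have hfrac0 : (0:ℝ) ≤ 1 - (k:ℝ)/n := by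
    rw [sub_nonneg, div_le_one hn0]
    exact_mod_cast hkn
  -- choose S₁ of card exactly k
  obtain ⟨S₁, -, hS₁⟩ := Finset.exists_subset_card_eq
    (show k ≤ (Finset.univ : Finset G).card by rw [Finset.card_univ, hN]; exact hkn)
  -- greedy construction
  have key : ∀ m : ℕ, ∃ S₂ : Finset G, S₂.card ≤ m ∧
      ((Finset.univ \ (S₁ * S₂)).card : ℝ) ≤ (n:ℝ) * (1 - (k:ℝ)/n)^m := by
    intro m
    induction m with
    | zero =>
      refine ⟨∅, le_refl 0, ?_⟩
      rw [Finset.mul_empty, Finset.sdiff_empty, Finset.card_univ, hN, pow_zero, mul_one]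
    | succ m ih =>
      obtain ⟨S₂, hcard, hcov⟩ := ih
      set U := Finset.univ \ (S₁ * S₂) with hU
      rcases U.eq_empty_or_nonempty with hUe | hUne
      · refine ⟨S₂, hcard.trans (Nat.le_succ m), ?_⟩
        rw [← hU, hUe]
        simp only [Finset.card_empty, Nat.cast_zero]
        positivity
      · -- counting: exists a good translate t
        have hsum : ∑ t : G, (U.filter (fun u => u * t⁻¹ ∈ S₁)).card = U.card * k := by
          have hcf : ∀ t : G, (U.filter (fun u => u * t⁻¹ ∈ S₁)).card
              = ∑ u ∈ U, if u * t⁻¹ ∈ S₁ then 1 else 0 := by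
            intro t; rw [Finset.card_filter]
          simp_rw [hcf]
          rw [Finset.sum_comm]
          have inner : ∀ u : G, (∑ t : G, if u * t⁻¹ ∈ S₁ then 1 else 0) = k := by
            intro u
            rw [← Finset.card_filter]
            have himg : Finset.univ.filter (fun t => u * t⁻¹ ∈ S₁)
                = S₁.image (fun s => s⁻¹ * u) := by
              ext t
              simp only [Finset.mem_filter, Finset.mem_univ, true_and, Finset.mem_image]
              constructor
              · intro h; exact ⟨u * t⁻¹, h, by group⟩
              · rintro ⟨s, hs, rfl⟩; simpa using hs
            rw [himg, Finset.card_image_of_injective _ (fun a b h => by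
              have := mul_right_cancel h
              exact inv_injective this), hS₁]
          simp_rw [inner]
          rw [Finset.sum_const, smul_eq_mul]
        have havg : ∃ t : G, U.card * k ≤ n * (U.filter (fun u => u * t⁻¹ ∈ S₁)).card := by
          by_contra h
          push_neg at h
          have hlt : ∑ t : G, n * (U.filter (fun u => u * t⁻¹ ∈ S₁)).card
              < ∑ _t : G, U.card * k := by
            apply Finset.sum_lt_sum_of_nonempty Finset.univ_nonempty
            intro t _; exact h t
          rw [← Finset.mul_sum, hsum, Finset.sum_const, Finset.card_univ, hN,
            smul_eq_mul] at hlt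
          omega
        obtain ⟨t, ht⟩ := havg
        refine ⟨insert t S₂, (Finset.card_insert_le t S₂).trans (by omega), ?_⟩
        have hmulins : S₁ * insert t S₂ = (S₁ * S₂) ∪ S₁.image (· * t) := by
          ext x
          simp only [Finset.mem_mul, Finset.mem_insert, Finset.mem_union, Finset.mem_image]
          constructor
          · rintro ⟨a, ha, b, (rfl | hb), rfl⟩
            · exact Or.inr ⟨a, ha, rfl⟩
            · exact Or.inl ⟨a, ha, b, hb, rfl⟩
          · rintro (⟨a, ha, b, hb, rfl⟩ | ⟨a, ha, rfl⟩)
            · exact ⟨a, ha, b, Or.inr hb, rfl⟩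
            · exact ⟨a, ha, t, Or.inl rfl, rfl⟩
        have hsd : Finset.univ \ (S₁ * insert t S₂) = U \ S₁.image (· * t) := by
          ext x
          simp only [hmulins, hU, Finset.mem_sdiff, Finset.mem_union, Finset.mem_univ,
            true_and]
          tauto
        have hinter : U ∩ S₁.image (· * t) = U.filter (fun u => u * t⁻¹ ∈ S₁) := by
          ext u
          simp only [Finset.mem_inter, Finset.mem_image, Finset.mem_filter]
          constructor
          · rintro ⟨hu, a, ha, rfl⟩; exact ⟨hu, by simpa using ha⟩
          · rintro ⟨hu, h⟩; exact ⟨hu, u * t⁻¹, h, by group⟩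
        set f : ℕ := (U.filter (fun u => u * t⁻¹ ∈ S₁)).card with hf
        have hcardsd : (U \ S₁.image (· * t)).card + f = U.card := by
          rw [hf, ← hinter]; exact Finset.card_sdiff_add_card_inter _ _
        have hfR : (U.card : ℝ) * k / n ≤ f := by
          rw [div_le_iff₀ hn0]
          calc (U.card : ℝ) * k = ((U.card * k : ℕ) : ℝ) := by push_cast; ring
            _ ≤ ((n * f : ℕ) : ℝ) := by exact_mod_cast ht
            _ = (f:ℝ) * n := by push_cast; ring
        have : ((U \ S₁.image (· * t)).card : ℝ) ≤ (U.card : ℝ) * (1 - (k:ℝ)/n) := by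
          have h1 : ((U \ S₁.image (· * t)).card : ℝ) = (U.card : ℝ) - f := by
            have := hcardsd
            push_cast [← this]
            ring
          rw [h1]
          have : (U.card : ℝ) * ((k:ℝ)/n) ≤ f := by
            calc (U.card : ℝ) * ((k:ℝ)/n) = (U.card : ℝ) * k / n := by ring
              _ ≤ f := hfR
          linarith [this]
        rw [hsd]
        calc ((U \ S₁.image (· * t)).card : ℝ) ≤ (U.card : ℝ) * (1 - (k:ℝ)/n) := this
          _ ≤ ((n:ℝ) * (1 - (k:ℝ)/n)^m) * (1 - (k:ℝ)/n) := by
              apply mul_le_mul_of_nonneg_right hcov hfrac0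
          _ = (n:ℝ) * (1 - (k:ℝ)/n)^(m+1) := by ring
  obtain ⟨S₂, hcard, hcov⟩ := key k
  -- show the uncovered set is empty
  have hlt1 : ((Finset.univ \ (S₁ * S₂)).card : ℝ) < 1 := by
    have hstep : (1 - (k:ℝ)/n) < Real.exp (-(k:ℝ)/n) := by
      have hne : -(k:ℝ)/n ≠ 0 := div_ne_zero (neg_ne_zero.mpr hkR.ne') hn0.ne'
      have h := Real.add_one_lt_exp hne
      rw [neg_div] at h ⊢
      linarith
    have hpow : (1 - (k:ℝ)/n)^k < (Real.exp (-(k:ℝ)/n))^k :=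
      pow_lt_pow_left₀ hstep hfrac0 (by omega)
    have hexp : (Real.exp (-(k:ℝ)/n))^k = Real.exp (-(k:ℝ)^2/n) := by
      rw [← Real.exp_nat_mul]
      congr 1
      ring
    have hk2 : (n:ℝ) * Real.log n ≤ (k:ℝ)^2 := by
      have h1 : Real.sqrt ((n:ℝ) * Real.log n) ≤ (k:ℝ) := Nat.le_ceil _
      calc (n:ℝ) * Real.log n = Real.sqrt ((n:ℝ) * Real.log n)^2 := (Real.sq_sqrt hx0).symm
        _ ≤ (k:ℝ)^2 := by nlinarith [Real.sqrt_nonneg ((n:ℝ) * Real.log n)]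
    have hfin : (n:ℝ) * Real.exp (-(k:ℝ)^2/n) ≤ 1 := by
      have : Real.exp (-(k:ℝ)^2/n) ≤ Real.exp (-Real.log n) := by
        apply Real.exp_le_exp.mpr
        rw [neg_div, neg_le_neg_iff, le_div_iff₀ hn0]
        nlinarith [hk2]
      calc (n:ℝ) * Real.exp (-(k:ℝ)^2/n) ≤ (n:ℝ) * Real.exp (-Real.log n) := by
            exact mul_le_mul_of_nonneg_left this hn0.le
        _ = 1 := by
            rw [Real.exp_neg, Real.exp_log hn0]
            field_simp
    calc ((Finset.univ \ (S₁ * S₂)).card : ℝ) ≤ (n:ℝ) * (1 - (k:ℝ)/n)^k := hcov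
      _ < (n:ℝ) * (Real.exp (-(k:ℝ)/n))^k := by
          exact (mul_lt_mul_iff_right₀ hn0).mpr hpow
      _ = (n:ℝ) * Real.exp (-(k:ℝ)^2/n) := by rw [hexp]
      _ ≤ 1 := hfin
  have hempty : Finset.univ \ (S₁ * S₂) = ∅ := by
    have h1 : (Finset.univ \ (S₁ * S₂)).card < 1 := by exact_mod_cast hlt1
    exact Finset.card_eq_zero.mp (by omega)
  have huniv : (S₁ * S₂ : Finset G) = Finset.univ := by
    apply Finset.eq_univ_of_forall
    intro x
    by_contra hx
    have hmem : x ∈ Finset.univ \ (S₁ * S₂) := Finset.mem_sdiff.mpr ⟨Finset.mem_univ x, hx⟩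
    rw [hempty] at hmem
    exact absurd hmem (Finset.notMem_empty x)
  refine ⟨(S₁ : Set G), (S₂ : Set G), ?_, ?_, ?_⟩
  · rw [Set.ncard_coe_finset, hS₁]
  · rw [Set.ncard_coe_finset]; exact hcard
  · rw [← Finset.coe_mul, huniv, Finset.coe_univ]
end

section
/- Let G be a finite group of order n > 1 and let t = ⌈√(n ln n)⌉. Fix any subset S₁ of G with |S₁| = t. If R is a uniformly random t-element subset of G, then for each fixed g ∈ G, the probability that g ∉ S₁R is less than 1/n, where S₁R = {xy : x ∈ S₁, y ∈ R}. -/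
open Pointwise

lemma descFac_aux (a b : ℕ) (hab : a ≤ b) :
    ∀ k : ℕ, a.descFactorial k * b ^ k ≤ b.descFactorial k * a ^ k
  | 0 => by simp
  | k + 1 => by
    have ih := descFac_aux a b hab k
    have h1 : (a - k) * b ≤ (b - k) * a := by
      rw [Nat.sub_mul, Nat.sub_mul, mul_comm b a]
      exact Nat.sub_le_sub_left (Nat.mul_le_mul_left k hab) _
    calc a.descFactorial (k+1) * b ^ (k+1)
        = ((a - k) * b) * (a.descFactorial k * b ^ k) := by
          rw [Nat.descFactorial_succ, pow_succ]; ring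
      _ ≤ ((b - k) * a) * (b.descFactorial k * a ^ k) := Nat.mul_le_mul h1 ih
      _ = b.descFactorial (k+1) * a ^ (k+1) := by
          rw [Nat.descFactorial_succ, pow_succ]; ring

theorem stmt_18 {G : Type*} [Group G] [Fintype G] [DecidableEq G]
    (n : ℕ) (hn : Fintype.card G = n) (hn1 : 1 < n)
    (t : ℕ) (ht : t = ⌈Real.sqrt (n * Real.log n)⌉₊)
    (S₁ : Finset G) (hS₁ : S₁.card = t) (g : G) :
    (((Finset.univ : Finset G).powersetCard t).filter
        (fun R => g ∉ S₁ * R)).card / ((((Finset.univ : Finset G).powersetCard t).card : ℝ))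
      < 1 / n := by
  have hn0 : (0:ℝ) < n := by positivity
  have hnR1 : (1:ℝ) < n := by exact_mod_cast hn1
  -- positivity of n log n
  have hlogpos : 0 < Real.log n := Real.log_pos hnR1
  have hnl : 0 < (n:ℝ) * Real.log n := by positivity
  have ht0 : 0 < t := by
    rw [ht]; rw [Nat.ceil_pos]; exact Real.sqrt_pos.mpr hnl
  have htsq : (n:ℝ) * Real.log n ≤ (t:ℝ)^2 := by
    have h1 : Real.sqrt ((n:ℝ) * Real.log n) ≤ (t:ℝ) := by
      rw [ht]; exact Nat.le_ceil _
    have := mul_self_le_mul_self (Real.sqrt_nonneg _) h1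
    rwa [Real.mul_self_sqrt hnl.le, ← sq] at this
  have htn : t ≤ n := by
    rw [ht, Nat.ceil_le]
    have hle : Real.log n ≤ (n:ℝ) := (Real.log_le_sub_one_of_pos hn0).trans (by linarith)
    have h2 : (n:ℝ) * Real.log n ≤ (n:ℝ)^2 := by nlinarith
    calc Real.sqrt ((n:ℝ)*Real.log n) ≤ Real.sqrt ((n:ℝ)^2) := Real.sqrt_le_sqrt h2
      _ = n := Real.sqrt_sq hn0.le
  -- the set of "bad" elements for R
  set T : Finset G := S₁.image (fun x => x⁻¹ * g) with hT
  have hTcard : T.card = t := by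
    rw [hT, Finset.card_image_of_injective _ (fun a b h => by
      simpa using mul_right_cancel h), hS₁]
  have hmem : ∀ R : Finset G, g ∉ S₁ * R ↔ R ⊆ Tᶜ := by
    intro R
    constructor
    · intro h y hy
      rw [Finset.mem_compl]
      intro hyT
      rw [hT, Finset.mem_image] at hyT
      obtain ⟨x, hx, hxy⟩ := hyT
      apply h
      have hmm : x * y ∈ S₁ * R := Finset.mul_mem_mul hx hy
      rwa [← hxy, mul_inv_cancel_left] at hmm
    · intro h hg
      rw [Finset.mem_mul] at hg
      obtain ⟨x, hx, y, hy, hxy⟩ := hg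
      have : y ∈ Tᶜ := h hy
      rw [Finset.mem_compl, hT, Finset.mem_image] at this
      exact this ⟨x, hx, by rw [← hxy]; group⟩
  have hfilter : (((Finset.univ : Finset G).powersetCard t).filter
      (fun R => g ∉ S₁ * R)) = Tᶜ.powersetCard t := by
    ext R
    simp only [Finset.mem_filter, Finset.mem_powersetCard, Finset.subset_univ, true_and,
      hmem R]
    tauto
  have hcompl : Tᶜ.card = n - t := by
    rw [Finset.card_compl, hTcard, hn]
  rw [hfilter, Finset.card_powersetCard, hcompl, Finset.card_powersetCard,
    Finset.card_univ, hn]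
  -- now purely numerical: (n-t).choose t / n.choose t < 1/n
  rcases lt_or_ge n (2 * t) with h2t | h2t
  · rw [Nat.choose_eq_zero_of_lt (by omega)]
    simp only [Nat.cast_zero, zero_div]
    positivity
  · have hCpos : (0:ℝ) < (n.choose t : ℝ) := by
      exact_mod_cast Nat.choose_pos htn
    have hnat : (n - t).choose t * n ^ t ≤ n.choose t * (n - t) ^ t := by
      have := descFac_aux (n - t) n (Nat.sub_le n t) t
      rw [Nat.descFactorial_eq_factorial_mul_choose,
        Nat.descFactorial_eq_factorial_mul_choose] at this
      have hf : 0 < (Nat.factorial t) := Nat.factorial_pos t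
      calc (n - t).choose t * n ^ t
          = ((Nat.factorial t) * (n - t).choose t * n ^ t) / (Nat.factorial t) := by
            rw [Nat.mul_assoc, Nat.mul_div_cancel_left _ hf]
        _ ≤ ((Nat.factorial t) * n.choose t * (n - t) ^ t) / (Nat.factorial t) := Nat.div_le_div_right this
        _ = n.choose t * (n - t) ^ t := by
            rw [Nat.mul_assoc, Nat.mul_div_cancel_left _ hf]
    have hR : ((n - t).choose t : ℝ) / (n.choose t : ℝ) ≤ (((n:ℝ) - t) / n) ^ t := by
      rw [div_le_iff₀ hCpos, div_pow, div_mul_eq_mul_div, le_div_iff₀ (by positivity)]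
      have : ((n - t).choose t : ℝ) * (n:ℝ)^t ≤ (n.choose t : ℝ) * ((n - t : ℕ):ℝ)^t := by
        exact_mod_cast hnat
      rw [Nat.cast_sub htn] at this
      linarith
    have htR : 0 < (t:ℝ) := by exact_mod_cast ht0
    have hfrac : ((n:ℝ) - t) / n = 1 - (t:ℝ)/n := by field_simp
    have hstep : (1 - (t:ℝ)/n) < Real.exp (-(t/n)) := by
      have := Real.add_one_lt_exp (x := -(t:ℝ)/n) (by
        have : (t:ℝ)/n > 0 := by positivity
        intro h; rw [neg_div] at h; linarith)
      rw [neg_div] at this; linarith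
    have hnn : (0:ℝ) ≤ 1 - (t:ℝ)/n := by
      have : (t:ℝ) ≤ n := by exact_mod_cast htn
      have := div_le_one_of_le₀ this hn0.le
      linarith
    have hpow : (1 - (t:ℝ)/n) ^ t < Real.exp (-(t/n)) ^ t :=
      pow_lt_pow_left₀ hstep hnn (by omega)
    have hexp : Real.exp (-((t:ℝ)/n)) ^ t = Real.exp (-((t:ℝ)^2/n)) := by
      rw [← Real.exp_nat_mul]
      congr 1
      rw [mul_neg, neg_inj, sq, mul_div_assoc]
    have hfin : Real.exp (-((t:ℝ)^2/n)) ≤ 1 / n := by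
      rw [show (1:ℝ)/n = Real.exp (Real.log (1/n)) by
        rw [Real.exp_log (by positivity)]]
      apply Real.exp_le_exp.mpr
      rw [one_div, Real.log_inv]
      rw [neg_le_neg_iff, le_div_iff₀ hn0]
      linarith [htsq]
    calc ((n - t).choose t : ℝ) / (n.choose t : ℝ)
        ≤ (1 - (t:ℝ)/n) ^ t := by rw [← hfrac]; exact hR
      _ < Real.exp (-((t:ℝ)/n)) ^ t := hpow
      _ = Real.exp (-((t:ℝ)^2/n)) := hexp
      _ ≤ 1 / n := hfin
end
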